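/- arXiv:0810.2016 — 3 statements merged into one kernel-verified Lean document; each statement's English description precedes it below -/
import Mathlib

section
/- Let (Ω, ℱ, P) be a probability space with filtration (ℱ_t)_{t=0}^T and let C = (C_t) be an adapted sequence of closed convex sets (a convex market model). Define A_T(C) = L^0(C_0,ℱ_0) + ⋯ + L^0(C_T,ℱ_T) (sums of measurable selections) and A(C) = {adapted c = (c_0,…,c_T) | ∃ adapted x with x_{-1}=0, x_T=0 and x_t − x_{t−1} + c_t ∈ C_t a.s. for all t}. Then a claim process c belongs to A(C) if and only if ∑_{t=0}^T c_t ∈ A_T(C). -/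
/-!
The portfolio process `x` and the selections `w` determine each other through
`w t = x t - x (t - 1) + c t` and `x t = ∑_{s ≤ t} (w s - c s)`; summing the first relation
telescopes to `∑ c = ∑ w + x T`, so `x T = 0` is exactly `∑ c = ∑ w`.
-/

open MeasureTheory Finset

section Telescoping

variable {α : Type*} [AddCommGroup α]

lemma sum_range_succ_sub_prev (f : ℕ → α) (n : ℕ) :
    ∑ t ∈ range (n + 1), (f t - if t = 0 then 0 else f (t - 1)) = f n := by
  induction n with
  | zero => simp
  | succ n ih => rw [sum_range_succ, ih]; simp

lemma partialSum_sub_prev (f : ℕ → α) (t : ℕ) :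
    (∑ s ∈ range (t + 1), f s) - (if t = 0 then 0 else ∑ s ∈ range (t - 1 + 1), f s) = f t := by
  cases t with
  | zero => simp
  | succ t => simp [sum_range_succ _ (t + 1)]

end Telescoping

section Adapted

variable {Ω E : Type*} [AddCommGroup E] [MeasurableSpace E]
  {F : ℕ → MeasurableSpace Ω}

lemma measurable_sub_prev [MeasurableSub₂ E] (hF : Monotone F) {x : ℕ → Ω → E}
    (hx : ∀ t, Measurable[F t] (x t)) (t : ℕ) :
    Measurable[F t] fun ω => x t ω - if t = 0 then 0 else x (t - 1) ω := by
  refine (hx t).sub ?_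
  split_ifs
  · exact measurable_const
  · exact (hx (t - 1)).mono (hF (Nat.sub_le t 1)) le_rfl

lemma measurable_partialSum [MeasurableAdd₂ E] (hF : Monotone F) {y : ℕ → Ω → E}
    (hy : ∀ t, Measurable[F t] (y t)) (t : ℕ) :
    Measurable[F t] fun ω => ∑ s ∈ range (t + 1), y s ω :=
  Finset.measurable_sum _ fun s hs =>
    (hy s).mono (hF (Nat.lt_succ_iff.mp (mem_range.mp hs))) le_rfl

end Adapted

theorem mem_A_iff_sum_mem_AT_general {Ω : Type*} [m0 : MeasurableSpace Ω]
    (P : Measure Ω) (d T : ℕ)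
    (F : ℕ → MeasurableSpace Ω) (hmono : ∀ s t, s ≤ t → F s ≤ F t)
    (C : ℕ → Ω → Set (Fin d → ℝ))
    (c : ℕ → Ω → Fin d → ℝ) (hc : ∀ t, Measurable[F t] (c t)) :
    (∃ x : ℕ → Ω → Fin d → ℝ, (∀ t, Measurable[F t] (x t)) ∧
        (∀ᵐ ω ∂P, x T ω = 0) ∧
        (∀ t ≤ T, ∀ᵐ ω ∂P,
          x t ω - (if t = 0 then 0 else x (t - 1) ω) + c t ω ∈ C t ω)) ↔
      (∃ w : ℕ → Ω → Fin d → ℝ, (∀ t, Measurable[F t] (w t)) ∧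
        (∀ t ≤ T, ∀ᵐ ω ∂P, w t ω ∈ C t ω) ∧
        (∀ᵐ ω ∂P, ∑ t ∈ range (T + 1), c t ω = ∑ t ∈ range (T + 1), w t ω)) := by
  have hF : Monotone F := fun s t hst => hmono s t hst
  constructor
  · rintro ⟨x, hx, hxT, hxC⟩
    refine ⟨fun t ω => x t ω - (if t = 0 then 0 else x (t - 1) ω) + c t ω,
      fun t => (measurable_sub_prev hF hx t).add (hc t), hxC, ?_⟩
    filter_upwards [hxT] with ω hω
    rw [sum_add_distrib, sum_range_succ_sub_prev (x · ω), hω, zero_add]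
  · rintro ⟨w, hw, hwC, hsum⟩
    refine ⟨fun t ω => ∑ s ∈ range (t + 1), (w s ω - c s ω),
      measurable_partialSum hF fun t => (hw t).sub (hc t), ?_, fun t ht => ?_⟩
    · filter_upwards [hsum] with ω hω
      rw [sum_sub_distrib, hω, sub_self]
    · filter_upwards [hwC t ht] with ω hω
      rwa [partialSum_sub_prev (fun s => w s ω - c s ω), sub_add_cancel]

/-- A claim process `c` can be superhedged at zero cost (i.e. `c ∈ A(C)`) iff the total
claim `∑ₜ cₜ` is a sum of measurable selections of the solvency regions
(i.e. `∑ₜ cₜ ∈ A_T(C)`). -/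
theorem mem_A_iff_sum_mem_AT {Ω : Type*} [m0 : MeasurableSpace Ω]
    (P : Measure Ω) [IsProbabilityMeasure P] (d T : ℕ)
    (F : ℕ → MeasurableSpace Ω) (hF : ∀ t, F t ≤ m0) (hmono : ∀ s t, s ≤ t → F s ≤ F t)
    (C : ℕ → Ω → Set (Fin d → ℝ))
    (hCneg : ∀ t, ∀ ω, {v : Fin d → ℝ | ∀ i, v i ≤ 0} ⊆ C t ω)
    (hCclosed : ∀ t ω, IsClosed (C t ω)) (hCconv : ∀ t ω, Convex ℝ (C t ω))
    (c : ℕ → Ω → Fin d → ℝ) (hc : ∀ t, Measurable[F t] (c t)) :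
    (∃ x : ℕ → Ω → Fin d → ℝ, (∀ t, Measurable[F t] (x t)) ∧
        (∀ᵐ ω ∂P, x T ω = 0) ∧
        (∀ t ≤ T, ∀ᵐ ω ∂P,
          x t ω - (if t = 0 then 0 else x (t - 1) ω) + c t ω ∈ C t ω)) ↔
      (∃ w : ℕ → Ω → Fin d → ℝ, (∀ t, Measurable[F t] (w t)) ∧
        (∀ t ≤ T, ∀ᵐ ω ∂P, w t ω ∈ C t ω) ∧
        (∀ᵐ ω ∂P, ∑ t ∈ range (T + 1), c t ω = ∑ t ∈ range (T + 1), w t ω)) :=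
  mem_A_iff_sum_mem_AT_general (m0 := m0) P d T F hmono C c hc
end

section
/- (Kabanov–Stricker subsequence lemma) Let (x^n)_{n≥1} be a sequence of ℝ^d-valued random vectors on a probability space (Ω, ℱ, P) such that liminf_n |x^n| < ∞ almost surely. Then there exists an ℱ-measurable strictly increasing ℕ-valued random sequence (τ^n) such that (x^{τ^n}) converges almost surely to some ℝ^d-valued random vector x. -/
open MeasureTheory Filter

namespace KSaux

variable {Ω : Type*} [MeasurableSpace Ω]

open scoped Classical in
/-- The least `n > m` satisfying `T n ω`, or `m+1` if there is none. -/
noncomputable def firstAfter (T : ℕ → Ω → Prop) (m : ℕ) (ω : Ω) : ℕ :=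
  if h : ∃ n, m < n ∧ T n ω then Nat.find h else m + 1

lemma lt_firstAfter (T : ℕ → Ω → Prop) (m : ℕ) (ω : Ω) : m < firstAfter T m ω := by
  classical
  unfold firstAfter
  split
  · next h => exact (Nat.find_spec h).1
  · exact Nat.lt_succ_self m

lemma firstAfter_spec {T : ℕ → Ω → Prop} {m : ℕ} {ω : Ω} (h : ∃ n, m < n ∧ T n ω) :
    T (firstAfter T m ω) ω := by
  classical
  unfold firstAfter
  rw [dif_pos h]
  exact (Nat.find_spec h).2

lemma measurable_firstAfter {T : ℕ → Ω → Prop} (hT : ∀ n, MeasurableSet {ω | T n ω}) (m : ℕ) :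
    Measurable (firstAfter T m) := by
  classical
  apply measurable_to_countable'
  intro k
  have hkey : firstAfter T m ⁻¹' {k} =
      ({ω | m < k ∧ T k ω ∧ ∀ j, m < j → j < k → ¬ T j ω}) ∪
      ({ω | ¬ ∃ n, m < n ∧ T n ω} ∩ (if k = m + 1 then Set.univ else ∅)) := by
    ext ω
    simp only [Set.mem_preimage, Set.mem_singleton_iff, Set.mem_union, Set.mem_inter_iff,
      Set.mem_setOf_eq]
    unfold firstAfter
    by_cases h : ∃ n, m < n ∧ T n ω
    · rw [dif_pos h]
      constructor
      · intro hk
        left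
        have := Nat.find_eq_iff (m := k) h |>.mp hk
        refine ⟨this.1.1, this.1.2, fun j hmj hjk hTj => this.2 j hjk ⟨hmj, hTj⟩⟩
      · rintro (⟨h1, h2, h3⟩ | ⟨hn, _⟩)
        · exact (Nat.find_eq_iff h).mpr ⟨⟨h1, h2⟩, fun j hjk ⟨hmj, hTj⟩ => h3 j hmj hjk hTj⟩
        · exact absurd h hn
      
    · rw [dif_neg h]
      constructor
      · intro hk
        right
        refine ⟨h, ?_⟩
        rw [if_pos hk.symm]
        trivial
      · rintro (⟨h1, h2, _⟩ | ⟨_, hif⟩)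
        · exact absurd ⟨k, h1, h2⟩ h
        · by_cases hk : k = m + 1
          · exact hk.symm
          · rw [if_neg hk] at hif; exact absurd hif (Set.notMem_empty ω)
  rw [hkey]
  apply MeasurableSet.union
  · have : {ω | m < k ∧ T k ω ∧ ∀ j, m < j → j < k → ¬ T j ω} =
        if m < k then ({ω | T k ω} ∩ ⋂ (j : ℕ) (_ : m < j) (_ : j < k), {ω | T j ω}ᶜ)
        else ∅ := by
      ext ω
      by_cases hmk : m < k <;> simp [hmk]
    rw [this]
    split
    · exact (hT k).inter (MeasurableSet.iInter fun j => MeasurableSet.iInter fun _ =>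
        MeasurableSet.iInter fun _ => (hT j).compl)
    · exact MeasurableSet.empty
  · apply MeasurableSet.inter
    · have : {ω | ¬ ∃ n, m < n ∧ T n ω} = (⋃ (n : ℕ) (_ : m < n), {ω | T n ω})ᶜ := by
        ext ω; simp
      rw [this]
      exact (MeasurableSet.iUnion fun n => MeasurableSet.iUnion fun _ => hT n).compl
    · split <;> simp

lemma measurable_bind {β : Type*} [MeasurableSpace β] {g : Ω → ℕ} {F : ℕ → Ω → β}
    (hg : Measurable g) (hF : ∀ m, Measurable (F m)) :
    Measurable fun ω => F (g ω) ω := by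
  intro t ht
  have : (fun ω => F (g ω) ω) ⁻¹' t = ⋃ m, (g ⁻¹' {m}) ∩ (F m ⁻¹' t) := by
    ext ω; simp
  rw [this]
  exact MeasurableSet.iUnion fun m => (hg (measurableSet_singleton m)).inter (hF m ht)

/-- Iterated first-witness extraction. -/
noncomputable def extract (S : ℕ → ℕ → Ω → Prop) : ℕ → Ω → ℕ
  | 0 => fun ω => firstAfter (S 0) 0 ω
  | (k+1) => fun ω => firstAfter (S (k+1)) (extract S k ω) ω

lemma extract_lt (S : ℕ → ℕ → Ω → Prop) (k : ℕ) (ω : Ω) :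
    extract S k ω < extract S (k+1) ω := lt_firstAfter _ _ _

lemma measurable_extract {S : ℕ → ℕ → Ω → Prop} (hS : ∀ k n, MeasurableSet {ω | S k n ω}) :
    ∀ k, Measurable (extract S k)
  | 0 => measurable_firstAfter (hS 0) 0
  | (k+1) => by
    have ih := measurable_extract hS k
    exact measurable_bind (g := extract S k) (F := fun m => firstAfter (S (k+1)) m) ih
      (fun m => measurable_firstAfter (hS (k+1)) m)

lemma extract_spec {S : ℕ → ℕ → Ω → Prop} {ω : Ω}
    (hω : ∀ k m, ∃ n, m < n ∧ S k n ω) : ∀ k, S k (extract S k ω) ω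
  | 0 => firstAfter_spec (hω 0 0)
  | (k+1) => firstAfter_spec (hω (k+1) _)

end KSaux


open KSaux in
/-- Kabanov–Stricker subsequence lemma: if `liminf |xⁿ| < ∞` a.s., there is a measurable
strictly increasing random subsequence along which `xⁿ` converges almost surely. -/
theorem kabanov_stricker_subsequence {Ω : Type*} [MeasurableSpace Ω]
    (P : Measure Ω) [IsProbabilityMeasure P] (d : ℕ)
    (x : ℕ → Ω → EuclideanSpace ℝ (Fin d)) (hx : ∀ n, Measurable (x n))
    (hbdd : ∀ᵐ ω ∂P, liminf (fun n => (‖x n ω‖₊ : ENNReal)) atTop < ⊤) :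
    ∃ τ : ℕ → Ω → ℕ, (∀ n, Measurable (τ n)) ∧
      (∀ n ω, τ n ω < τ (n + 1) ω) ∧
      ∃ xlim : Ω → EuclideanSpace ℝ (Fin d),
        ∀ᵐ ω ∂P, Tendsto (fun n => x (τ n ω) ω) atTop (nhds (xlim ω)) := by
  classical
  have mcoord : ∀ (n : ℕ) (i : Fin d), Measurable fun ω => x n ω i :=
    fun n i => (EuclideanSpace.proj (𝕜 := ℝ) i).measurable.comp (hx n)
  have coord_le : ∀ (y : EuclideanSpace ℝ (Fin d)) (i : Fin d), |y i| ≤ ‖y‖ := by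
    intro y i
    rw [EuclideanSpace.norm_eq]
    have h1 : |y i| = Real.sqrt (‖y i‖ ^ 2) := by
      rw [Real.norm_eq_abs, Real.sqrt_sq_eq_abs, abs_abs]
    rw [h1]
    exact Real.sqrt_le_sqrt (Finset.single_le_sum
      (fun j _ => sq_nonneg ‖y j‖) (Finset.mem_univ i))
  set ℓ : Ω → ENNReal := fun ω => liminf (fun n => (‖x n ω‖₊ : ENNReal)) atTop with hℓdef
  have mℓ : Measurable ℓ := Measurable.liminf fun n => ((hx n).nnnorm).coe_nnreal_ennreal
  set G : Set Ω := {ω | ℓ ω < ⊤} with hGdef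
  set M : Ω → ℝ := fun ω => (ℓ ω).toReal + 1 with hMdef
  have mM : Measurable M := mℓ.ennreal_toReal.add measurable_const
  have hfreq : ∀ ω ∈ G, ∀ m : ℕ, ∃ n, m < n ∧ ‖x n ω‖ ≤ M ω := by
    intro ω hω m
    have hωne : ℓ ω ≠ ⊤ := (by exact hω : ℓ ω < ⊤).ne
    have hlt : ℓ ω < ℓ ω + 1 := ENNReal.lt_add_right hωne one_ne_zero
    have hfr : ∃ᶠ n in atTop, (‖x n ω‖₊ : ENNReal) < ℓ ω + 1 :=
      frequently_lt_of_liminf_lt (by isBoundedDefault) hlt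
    rcases frequently_atTop.mp hfr (m + 1) with ⟨n, hn, hlt'⟩
    refine ⟨n, by omega, ?_⟩
    have htop : ℓ ω + 1 ≠ ⊤ := ENNReal.add_ne_top.mpr ⟨hωne, ENNReal.one_ne_top⟩
    have h1 : ((‖x n ω‖₊ : ENNReal)).toReal ≤ (ℓ ω + 1).toReal :=
      ENNReal.toReal_mono htop hlt'.le
    rw [ENNReal.toReal_add hωne ENNReal.one_ne_top] at h1
    simpa [hMdef] using h1
  have main : ∀ K : ℕ, ∃ τ : ℕ → Ω → ℕ, (∀ n, Measurable (τ n)) ∧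
      (∀ n ω, τ n ω < τ (n + 1) ω) ∧
      (∀ ω ∈ G, (∀ n, ‖x (τ n ω) ω‖ ≤ M ω) ∧
        ∀ j : Fin d, (j : ℕ) < K →
          ∃ l : ℝ, Tendsto (fun n => x (τ n ω) ω j) atTop (nhds l)) := by
    intro K
    induction K with
    | zero =>
      refine ⟨extract (fun _ n ω => ‖x n ω‖ ≤ M ω), ?_, ?_, ?_⟩
      · exact fun n => measurable_extract (fun _ n => measurableSet_le (hx n).norm mM) n
      · exact fun n ω => extract_lt _ n ω
      · intro ω hω
        exact ⟨fun n => extract_spec (S := fun _ n ω => ‖x n ω‖ ≤ M ω) (fun _ m => hfreq ω hω m) n,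
          fun j hj => absurd hj (Nat.not_lt_zero _)⟩
    | succ K ih =>
      obtain ⟨τ, mτ, hτlt, hτG⟩ := ih
      by_cases hK : K < d
      · set i : Fin d := ⟨K, hK⟩ with hidef
        set z : ℕ → Ω → ℝ := fun n ω => x (τ n ω) ω i with hzdef
        have mz : ∀ n, Measurable (z n) := fun n =>
          measurable_bind (mτ n) (fun m => mcoord m i)
        set L : Ω → ℝ := fun ω => liminf (fun n => z n ω) atTop with hLdef
        have mL : Measurable L := Measurable.liminf mz
        set S : ℕ → ℕ → Ω → Prop := fun k n ω => |z n ω - L ω| < ((k : ℝ) + 1)⁻¹ with hSdef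
        have mS : ∀ k n, MeasurableSet {ω | S k n ω} := fun k n =>
          measurableSet_lt ((mz n).sub mL).abs measurable_const
        set ρ := extract S with hρdef
        have hρmono : ∀ ω, StrictMono fun n => ρ n ω :=
          fun ω => strictMono_nat_of_lt_succ fun n => extract_lt S n ω
        refine ⟨fun n ω => τ (ρ n ω) ω, ?_, ?_, ?_⟩
        · exact fun n => measurable_bind (measurable_extract mS n) mτ
        · intro n ω
          exact (strictMono_nat_of_lt_succ fun m => hτlt m ω) (extract_lt S n ω)
        · intro ω hω
          obtain ⟨hbound, hconv⟩ := hτG ω hω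
          have hzb : ∀ n, |z n ω| ≤ M ω := fun n => (coord_le _ i).trans (hbound n)
          have hbd_ge : IsBoundedUnder (· ≥ ·) atTop (fun n => z n ω) :=
            isBoundedUnder_of ⟨-(M ω), fun n => (abs_le.mp (hzb n)).1⟩
          have hbd_le : IsBoundedUnder (· ≤ ·) atTop (fun n => z n ω) :=
            isBoundedUnder_of ⟨M ω, fun n => (abs_le.mp (hzb n)).2⟩
          have hex : ∀ k m, ∃ n, m < n ∧ S k n ω := by
            intro k m
            have hε : (0 : ℝ) < ((k : ℝ) + 1)⁻¹ := by positivity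
            have h1 : ∃ᶠ n in atTop, z n ω < L ω + ((k : ℝ) + 1)⁻¹ :=
              frequently_lt_of_liminf_lt hbd_le.isCoboundedUnder_ge
                (by simpa [hLdef] using lt_add_of_pos_right (L ω) hε)
            have h2 : ∀ᶠ n in atTop, L ω - ((k : ℝ) + 1)⁻¹ < z n ω :=
              eventually_lt_of_lt_liminf (by simpa [hLdef] using sub_lt_self (L ω) hε) hbd_ge
            rcases frequently_atTop.mp (h1.and_eventually h2) (m + 1) with ⟨n, hn, hz1, hz2⟩
            exact ⟨n, by omega, abs_sub_lt_iff.mpr ⟨by linarith, by linarith⟩⟩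
          refine ⟨fun n => hbound _, ?_⟩
          intro j hj
          rcases lt_or_eq_of_le (Nat.lt_succ_iff.mp hj) with hjK | hjK
          · obtain ⟨l, hl⟩ := hconv j hjK
            exact ⟨l, hl.comp (hρmono ω).tendsto_atTop⟩
          · have hji : j = i := Fin.ext hjK
            subst hji
            refine ⟨L ω, ?_⟩
            have hspec : ∀ k, |z (ρ k ω) ω - L ω| < ((k : ℝ) + 1)⁻¹ :=
              fun k => extract_spec hex k
            rw [Metric.tendsto_atTop]
            intro ε hε
            obtain ⟨N, hN⟩ := exists_nat_one_div_lt hε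
            refine ⟨N, fun n hn => ?_⟩
            have hmono : ((n : ℝ) + 1)⁻¹ ≤ ((N : ℝ) + 1)⁻¹ :=
              inv_anti₀ (by positivity) (by exact_mod_cast by omega)
            calc dist (x (τ (ρ n ω) ω) ω i) (L ω) = |z (ρ n ω) ω - L ω| := Real.dist_eq _ _
              _ < ((n : ℝ) + 1)⁻¹ := hspec n
              _ ≤ ((N : ℝ) + 1)⁻¹ := hmono
              _ < ε := by rw [← one_div]; exact hN
      · refine ⟨τ, mτ, hτlt, fun ω hω => ?_⟩
        obtain ⟨hbound, hconv⟩ := hτG ω hω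
        refine ⟨hbound, fun j _ => hconv j ?_⟩
        have := j.isLt
        omega
  obtain ⟨τ, mτ, hτlt, hτG⟩ := main d
  have hconvG : ∀ ω ∈ G, ∃ l : EuclideanSpace ℝ (Fin d),
      Tendsto (fun n => x (τ n ω) ω) atTop (nhds l) := by
    intro ω hω
    obtain ⟨-, hconv⟩ := hτG ω hω
    choose l hl using fun j : Fin d => hconv j j.isLt
    refine ⟨(WithLp.equiv 2 (Fin d → ℝ)).symm l, ?_⟩
    have hpi : Tendsto (fun n => (fun j => x (τ n ω) ω j : Fin d → ℝ)) atTop (nhds l) :=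
      tendsto_pi_nhds.mpr hl
    exact ((PiLp.continuous_toLp 2 (fun _ : Fin d => ℝ)).tendsto l).comp hpi
  refine ⟨τ, mτ, hτlt,
    fun ω => if h : ∃ l, Tendsto (fun n => x (τ n ω) ω) atTop (nhds l) then h.choose else 0, ?_⟩
  filter_upwards [hbdd] with ω hω
  have hG : ω ∈ G := hω
  obtain ⟨l, hl⟩ := hconvG ω hG
  rw [dif_pos ⟨l, hl⟩]
  exact (⟨l, hl⟩ : ∃ l, Tendsto (fun n => x (τ n ω) ω) atTop (nhds l)).choose_spec
end

section
/- Let (y_t)_{t=0}^T be an ℝ^d-valued martingale with a.s. strictly positive components and let x = (x_t)_{t=0}^T be an adapted process with x_{-1} = 0 and x_T = 0 such that M_s := ∑_{t=0}^s x_{t-1}·(y_t − y_{t-1}) defines a martingale, and let c = (c_t)_{t=0}^T be an adapted process with c_t ∈ ℝ^d_+ a.s. and y_t·(x_t − x_{t−1} + c_t) ≤ 0 a.s. for all t. Then c_t = 0 a.s. for all t. -/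
/-!
Summation by parts turns `y_t · (x_t - x_{t-1})` summed over `t ≤ T` into `y_T · x_T - M_T`,
so with `x_T = 0` the hypothesis gives `∑_{t ≤ T} c_t · y_t ≤ M_T`. The left side is
nonnegative and `E[M_T] = E[M_0] = 0`, hence `∑_{t ≤ T} c_t · y_t = 0` a.s.; every summand is
nonnegative, and `c_t · y_t = 0` with `c_t ≥ 0`, `y_t > 0` componentwise forces `c_t = 0`.
-/

open MeasureTheory Finset
open scoped RealInnerProductSpace

section SummationByParts

variable {E : Type*} [NormedAddCommGroup E] [InnerProductSpace ℝ E]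

theorem sum_range_inner_lag_add_inner_sub_lag (a b : ℕ → E) (n : ℕ) :
    ∑ t ∈ range (n + 1),
      (⟪if t = 0 then 0 else a (t - 1), b t - if t = 0 then 0 else b (t - 1)⟫
        + ⟪b t, a t - if t = 0 then 0 else a (t - 1)⟫) = ⟪b n, a n⟫ := by
  induction n with
  | zero => simp
  | succ n ih =>
    rw [sum_range_succ, ih]
    simp only [Nat.succ_ne_zero, if_false, Nat.add_sub_cancel, inner_sub_right,
      real_inner_comm (a n) (b (n + 1)), real_inner_comm (a n) (b n)]
    ring

theorem sum_range_inner_le_of_inner_sub_lag_add_nonpos (a b c : ℕ → E) (n : ℕ) (ha : a n = 0)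
    (h : ∀ t ∈ range (n + 1), ⟪b t, a t - (if t = 0 then 0 else a (t - 1)) + c t⟫ ≤ 0) :
    ∑ t ∈ range (n + 1), ⟪c t, b t⟫ ≤
      ∑ t ∈ range (n + 1),
        ⟪if t = 0 then 0 else a (t - 1), b t - if t = 0 then 0 else b (t - 1)⟫ := by
  have hparts := sum_range_inner_lag_add_inner_sub_lag a b n
  rw [ha, inner_zero_right, sum_add_distrib] at hparts
  have hsum := sum_nonpos h
  simp only [inner_add_right, real_inner_comm (c _), sum_add_distrib] at hsum
  linarith

end SummationByParts

namespace EuclideanSpace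

variable {ι : Type*} [Fintype ι]

theorem inner_nonneg_of_nonneg {u v : EuclideanSpace ℝ ι} (hu : ∀ i, 0 ≤ u i)
    (hv : ∀ i, 0 ≤ v i) : 0 ≤ ⟪u, v⟫ := by
  simp only [PiLp.inner_apply, RCLike.inner_apply, conj_trivial]
  exact sum_nonneg fun i _ => mul_nonneg (hv i) (hu i)

theorem eq_zero_of_inner_eq_zero_of_pos {u v : EuclideanSpace ℝ ι} (hu : ∀ i, 0 ≤ u i)
    (hv : ∀ i, 0 < v i) (h : ⟪u, v⟫ = 0) : u = 0 := by
  simp only [PiLp.inner_apply, RCLike.inner_apply, conj_trivial] at h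
  have hterms := (sum_eq_zero_iff_of_nonneg fun i _ => mul_nonneg (hv i).le (hu i)).mp h
  ext i
  exact (mul_eq_zero.mp (hterms i (mem_univ i))).resolve_left (hv i).ne'

end EuclideanSpace

theorem MeasureTheory.Martingale.integral_eq {Ω ι E : Type*} {m0 : MeasurableSpace Ω}
    {μ : Measure Ω} [IsFiniteMeasure μ] [Preorder ι] [NormedAddCommGroup E] [NormedSpace ℝ E]
    [CompleteSpace E] {ℱ : Filtration ι m0} {f : ι → Ω → E} (hf : Martingale f ℱ μ)
    {i j : ι} (hij : i ≤ j) : ∫ ω, f j ω ∂μ = ∫ ω, f i ω ∂μ := by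
  rw [← integral_condExp (ℱ.le i)]
  exact integral_congr_ae (hf.condExp_ae_eq hij)

theorem MeasureTheory.ae_eq_zero_of_nonneg_of_le_of_integral_eq_zero {α : Type*}
    {m : MeasurableSpace α} {μ : Measure α} {f g : α → ℝ} (hf0 : 0 ≤ᵐ[μ] f)
    (hf : Integrable f μ) (hfg : f ≤ᵐ[μ] g) (hg : Integrable g μ)
    (hg0 : ∫ a, g a ∂μ = 0) : f =ᵐ[μ] 0 :=
  (integral_eq_zero_iff_of_nonneg_ae hf0 hf).mp <|
    le_antisymm ((integral_mono_ae hf hg hfg).trans hg0.le) (integral_nonneg_of_ae hf0)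

theorem deflator_kills_nonneg_claims_general {Ω : Type*} {m0 : MeasurableSpace Ω}
    {P : Measure Ω} [IsProbabilityMeasure P] (d T : ℕ)
    (ℱ : Filtration ℕ m0)
    (y x c : ℕ → Ω → EuclideanSpace ℝ (Fin d))
    (hypos : ∀ t, ∀ᵐ ω ∂P, ∀ i, 0 < y t ω i)
    (hxT : ∀ᵐ ω ∂P, x T ω = 0)
    (hM : Martingale (fun s ω => ∑ t ∈ range (s + 1),
        (inner ℝ (if t = 0 then (0 : EuclideanSpace ℝ (Fin d)) else x (t - 1) ω)
          (y t ω - if t = 0 then 0 else y (t - 1) ω) : ℝ)) ℱ P)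
    (hcpos : ∀ t, ∀ᵐ ω ∂P, ∀ i, 0 ≤ c t ω i)
    (hcint : ∀ t, Integrable (fun ω => (inner ℝ (c t ω) (y t ω) : ℝ)) P)
    (hineq : ∀ t ≤ T, ∀ᵐ ω ∂P,
      (inner ℝ (y t ω) (x t ω - (if t = 0 then 0 else x (t - 1) ω) + c t ω) : ℝ) ≤ 0) :
    ∀ t ≤ T, ∀ᵐ ω ∂P, c t ω = 0 := by
  set M : ℕ → Ω → ℝ := fun s ω => ∑ t ∈ range (s + 1),
    ⟪if t = 0 then 0 else x (t - 1) ω, y t ω - if t = 0 then 0 else y (t - 1) ω⟫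
  set S : Ω → ℝ := fun ω => ∑ t ∈ range (T + 1), ⟪c t ω, y t ω⟫
  have hsign : ∀ᵐ ω ∂P, ∀ t i, 0 ≤ c t ω i ∧ 0 < y t ω i := by
    refine ae_all_iff.2 fun t => ?_
    filter_upwards [hcpos t, hypos t] with ω hc hy i using ⟨hc i, hy i⟩
  have hS_nonneg : 0 ≤ᵐ[P] S := by
    filter_upwards [hsign] with ω hω
    exact sum_nonneg fun t _ =>
      EuclideanSpace.inner_nonneg_of_nonneg (fun i => (hω t i).1) (fun i => (hω t i).2.le)
  have hS_le : S ≤ᵐ[P] M T := by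
    have hineq' := (Filter.eventually_all_finset (range (T + 1))).2 fun t ht =>
      hineq t (Nat.lt_succ_iff.mp (mem_range.mp ht))
    filter_upwards [hineq', hxT] with ω hω hxω
    exact sum_range_inner_le_of_inner_sub_lag_add_nonpos (x · ω) (y · ω) (c · ω) T hxω hω
  have hM_zero : ∫ ω, M T ω ∂P = 0 := (hM.integral_eq (Nat.zero_le T)).trans (by simp [M])
  have hS_zero := ae_eq_zero_of_nonneg_of_le_of_integral_eq_zero hS_nonneg
    (integrable_finsetSum _ fun t _ => hcint t) hS_le (hM.integrable T) hM_zero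
  intro t ht
  filter_upwards [hS_zero, hsign] with ω hSω hω
  refine EuclideanSpace.eq_zero_of_inner_eq_zero_of_pos
    (fun i => (hω t i).1) (fun i => (hω t i).2) ?_
  refine (sum_eq_zero_iff_of_nonneg fun s _ => ?_).mp hSω t
    (mem_range.mpr (Nat.lt_succ_of_le ht))
  exact EuclideanSpace.inner_nonneg_of_nonneg (fun i => (hω s i).1) (fun i => (hω s i).2.le)

/-- A strictly positive martingale deflator kills nonnegative hedgeable claim processes:
if `y·(Δx_t + c_t) ≤ 0` a.s. with `c_t ≥ 0`, `x_T = 0` and the stochastic-integral-type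
process `M` is a martingale, then `c_t = 0` a.s. for all `t ≤ T`. -/
theorem deflator_kills_nonneg_claims {Ω : Type*} {m0 : MeasurableSpace Ω}
    {P : Measure Ω} [IsProbabilityMeasure P] (d T : ℕ)
    (ℱ : Filtration ℕ m0)
    (y x c : ℕ → Ω → EuclideanSpace ℝ (Fin d))
    (hy : Martingale y ℱ P)
    (hypos : ∀ t, ∀ᵐ ω ∂P, ∀ i, 0 < y t ω i)
    (hx : ∀ t, Measurable[ℱ t] (x t))
    (hxT : ∀ᵐ ω ∂P, x T ω = 0)
    (hM : Martingale (fun s ω => ∑ t ∈ range (s + 1),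
        (inner ℝ (if t = 0 then (0 : EuclideanSpace ℝ (Fin d)) else x (t - 1) ω)
          (y t ω - if t = 0 then 0 else y (t - 1) ω) : ℝ)) ℱ P)
    (hc : ∀ t, Measurable[ℱ t] (c t))
    (hcpos : ∀ t, ∀ᵐ ω ∂P, ∀ i, 0 ≤ c t ω i)
    (hcint : ∀ t, Integrable (fun ω => (inner ℝ (c t ω) (y t ω) : ℝ)) P)
    (hineq : ∀ t ≤ T, ∀ᵐ ω ∂P,
      (inner ℝ (y t ω) (x t ω - (if t = 0 then 0 else x (t - 1) ω) + c t ω) : ℝ) ≤ 0) :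
    ∀ t ≤ T, ∀ᵐ ω ∂P, c t ω = 0 :=
  deflator_kills_nonneg_claims_general d T ℱ y x c hypos hxT hM hcpos hcint hineq
end
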